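/- Fix R_max > 0, H_u ≥ 0, H_b > H_u, d_L > 0, θ > 0. Define for H_a ∈ (H_b, H_u + R_max): g(H_a) = Λ_H² − (d_L·Ω)² where Λ_H² = R_max² − (H_a − H_u)² and Ω = (H_a − H_u)/(H_a − H_b). Then any interior critical point of g satisfies (H_a − H_b)³ = d_L²·(H_b − H_u), i.e., H_a = H_b + (d_L²·(H_b − H_u))^{1/3}. -/
import Mathlib


/-- Interior critical points of g(Hₐ) = Λ_H² − (d_L Ω)² satisfy (Hₐ−H_b)³ = d_L²(H_b−Hᵤ). -/
theorem stmt6 (Rmax Hu Hb dL a : ℝ) (hR : 0 < Rmax) (hHu : 0 ≤ Hu) (hHb : Hu < Hb)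
    (hdL : 0 < dL) (ha : a ∈ Set.Ioo Hb (Hu + Rmax))
    (hcrit : HasDerivAt
      (fun x => (Rmax ^ 2 - (x - Hu) ^ 2) - (dL * ((x - Hu) / (x - Hb))) ^ 2) 0 a) :
    (a - Hb) ^ 3 = dL ^ 2 * (Hb - Hu) := by
  obtain ⟨h1, h2⟩ := ha
  have hvpos : 0 < a - Hb := by linarith
  have hv : a - Hb ≠ 0 := ne_of_gt hvpos
  have hupos : 0 < a - Hu := by linarith
  have hq : HasDerivAt (fun x => (x - Hu) / (x - Hb))
      ((1 * (a - Hb) - (a - Hu) * 1) / (a - Hb) ^ 2) a :=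
    ((hasDerivAt_id a).sub_const Hu).div ((hasDerivAt_id a).sub_const Hb) hv
  have hq2 : HasDerivAt (fun x => (dL * ((x - Hu) / (x - Hb))) ^ 2)
      (2 * (dL * ((a - Hu) / (a - Hb))) ^ 1 *
        (dL * ((1 * (a - Hb) - (a - Hu) * 1) / (a - Hb) ^ 2))) a :=
    (hq.const_mul dL).pow 2
  have hL : HasDerivAt (fun x => Rmax ^ 2 - (x - Hu) ^ 2)
      (0 - 2 * (a - Hu) ^ 1 * 1) a :=
    (hasDerivAt_const a (Rmax ^ 2)).sub (((hasDerivAt_id a).sub_const Hu).pow 2)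
  have hD := hL.sub hq2
  have h0 := hcrit.unique hD
  have key : - 2 * (a - Hu) * (1 + dL ^ 2 * (Hu - Hb) / (a - Hb) ^ 3) = 0 := by
    rw [h0]
    field_simp
    ring
  have h3 : 1 + dL ^ 2 * (Hu - Hb) / (a - Hb) ^ 3 = 0 := by
    rcases mul_eq_zero.1 key with h | h
    · exfalso; nlinarith
    · exact h
  have hv3 : (a - Hb) ^ 3 ≠ 0 := pow_ne_zero _ hv
  field_simp at h3
  linarith
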